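/- Let T be a continuous linear operator on a real or complex Fréchet space X. Then the linear span of the set of eigenvectors of T is contained in the set of vectors with locally bounded orbit for T: span(Eig(T)) ⊆ ℓbo(T). -/

import Mathlib

variable {𝕜 X : Type*} [RCLike 𝕜] [AddCommGroup X] [Module 𝕜 X]
  [UniformSpace X] [IsUniformAddGroup X] [ContinuousSMul 𝕜 X] [CompleteSpace X]
  [TopologicalSpace.MetrizableSpace X]

/-- The orbit `{Tⁿ x : n ≥ 1}` of a vector under a continuous linear operator. -/
def orbit (T : X →L[𝕜] X) (x : X) : Set X := Set.range fun n : ℕ => (T ^ (n + 1)) x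

/-- `x` has a locally bounded orbit for `T` if some neighbourhood `U` of `x`
meets the orbit of `x` in a von Neumann bounded set. -/
def HasLocallyBoundedOrbit (T : X →L[𝕜] X) (x : X) : Prop :=
  ∃ U ∈ nhds x, Bornology.IsVonNBounded 𝕜 (U ∩ orbit T x)

/-- On a real or complex Fréchet space, the linear span of the eigenvectors of `T`
is contained in the set of vectors with locally bounded orbit:
`span(Eig(T)) ⊆ ℓbo(T)`. -/
theorem span_eigenvectors_subset_lbo (T : X →L[𝕜] X) :
    (Submodule.span 𝕜 {x : X | ∃ c : 𝕜, T x = c • x} : Set X) ⊆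
      {x : X | HasLocallyBoundedOrbit T x} := by
  intro x hx
  obtain ⟨t, ht_sub, hxt⟩ := Submodule.mem_span_finite_of_mem_span hx
  set G : Submodule 𝕜 X := Submodule.span 𝕜 (t : Set X) with hG
  haveI : FiniteDimensional 𝕜 G := FiniteDimensional.span_of_finite 𝕜 t.finite_toSet
  -- G is T-invariant
  have hTG : ∀ y ∈ G, T y ∈ G := by
    intro y hy
    induction hy using Submodule.span_induction with
    | mem y hy =>
      obtain ⟨c, hc⟩ := ht_sub hy
      rw [hc]
      exact G.smul_mem c (Submodule.subset_span hy)
    | zero => simp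
    | add y z _ _ hy hz => simpa using G.add_mem hy hz
    | smul c y _ hy => simpa using G.smul_mem c hy
  -- the orbit of x lies in G
  have horb : ∀ n : ℕ, (T ^ n) x ∈ G := by
    intro n
    induction n with
    | zero => simpa using hxt
    | succ n ih =>
      have : (T ^ (n + 1)) x = T ((T ^ n) x) := by
        rw [pow_succ', ContinuousLinearMap.mul_apply]
      rw [this]
      exact hTG _ ih
  -- a continuous linear equivalence from G to a finite product of copies of 𝕜
  let b := Module.finBasis 𝕜 G
  let e : G ≃L[𝕜] (Fin (Module.finrank 𝕜 G) → 𝕜) := b.equivFun.toContinuousLinearEquiv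
  set x₀ : G := ⟨x, hxt⟩ with hx₀
  set r : ℝ := ‖e x₀‖ + 1 with hr
  set V : Set G := e ⁻¹' Metric.ball 0 r with hV
  -- V is a bounded neighbourhood of x₀ in G
  have hVnhds : V ∈ nhds x₀ := by
    apply e.continuous.continuousAt.preimage_mem_nhds
    refine Metric.isOpen_ball.mem_nhds ?_
    rw [Metric.mem_ball, dist_zero_right]
    show ‖e x₀‖ < ‖e x₀‖ + 1
    linarith
  -- its image in X is von Neumann bounded
  have himg : Bornology.IsVonNBounded 𝕜
      ((G.subtypeL.comp (e.symm : (Fin (Module.finrank 𝕜 G) → 𝕜) →L[𝕜] G)) ''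
        Metric.ball 0 r) :=
    (NormedSpace.isVonNBounded_ball 𝕜 _ r).image _
  -- extract a neighbourhood U of x in X from V
  obtain ⟨U, hUnhds, hUV⟩ := (mem_nhds_subtype (G : Set X) x₀ V).mp hVnhds
  refine ⟨U, hUnhds, himg.subset ?_⟩
  rintro p ⟨hpU, n, rfl⟩
  have hpG : (T ^ (n + 1)) x ∈ G := horb (n + 1)
  have hpV : (⟨(T ^ (n + 1)) x, hpG⟩ : G) ∈ V := hUV hpU
  refine ⟨e ⟨(T ^ (n + 1)) x, hpG⟩, hpV, ?_⟩
  simp
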